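/- Let h : X → Y be a function, S a finite subset of X (a Finset), and φ : X → ℝ with 0 ≤ φ x ≤ 1 for all x ∈ S. Then for every finite set B ⊆ h[S], ∑_{A ⊆ S, h[A] = B} ( ∏_{x ∈ A} φ x · ∏_{x ∈ S \ A} (1 - φ x) ) = ∏_{y ∈ B} ( 1 - ∏_{x ∈ S, h x = y} (1 - φ x) ) · ∏_{y ∈ h[S] \ B} ∏_{x ∈ S, h x = y} (1 - φ x). Consequently, pushing forward the possible-worlds distribution of φ along the elementwise image map A ↦ h[A] coincides with first pushing φ forward along h using probabilistic or on fibers and then forming the possible-worlds distribution (naturality of the possible-worlds transformation). -/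
import Mathlib

private lemma pw_total {X : Type*} [DecidableEq X] (F : Finset X) (φ : X → ℝ) :
    ∑ A ∈ F.powerset, ((∏ x ∈ A, φ x) * ∏ x ∈ F \ A, (1 - φ x)) = 1 := by
  rw [← Finset.prod_add]
  simp

private lemma pw_nonempty {X : Type*} [DecidableEq X] (F : Finset X) (φ : X → ℝ) :
    ∑ A ∈ F.powerset.filter (fun A => A.Nonempty),
        ((∏ x ∈ A, φ x) * ∏ x ∈ F \ A, (1 - φ x)) = 1 - ∏ x ∈ F, (1 - φ x) := by
  have h1 := pw_total F φ
  rw [← Finset.sum_filter_add_sum_filter_not F.powerset (fun A => A = ∅)] at h1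
  have h2 : F.powerset.filter (fun A => A = ∅) = {∅} := by
    ext A
    simp only [Finset.mem_filter, Finset.mem_powerset, Finset.mem_singleton]
    constructor
    · rintro ⟨-, rfl⟩; rfl
    · rintro rfl; exact ⟨Finset.empty_subset _, rfl⟩
  have h3 : F.powerset.filter (fun A => ¬ A = ∅) =
      F.powerset.filter (fun A => A.Nonempty) := by
    apply Finset.filter_congr; intro A _; simp [Finset.nonempty_iff_ne_empty]
  rw [h2, h3] at h1
  simp only [Finset.sum_singleton, Finset.prod_empty, Finset.sdiff_empty, one_mul] at h1
  linarith

private lemma pw_aux {X Y : Type*} [DecidableEq X] [DecidableEq Y]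
    (h : X → Y) (φ : X → ℝ) (B : Finset Y) :
    ∀ S : Finset X, B ⊆ S.image h →
    ∑ A ∈ S.powerset.filter (fun A => A.image h = B),
        ((∏ x ∈ A, φ x) * ∏ x ∈ S \ A, (1 - φ x)) =
      (∏ y ∈ B, (1 - ∏ x ∈ S.filter (fun x => h x = y), (1 - φ x))) *
        ∏ y ∈ (S.image h) \ B, ∏ x ∈ S.filter (fun x => h x = y), (1 - φ x) := by
  induction B using Finset.induction with
  | empty =>
    intro S _
    have hfil : S.powerset.filter (fun A => A.image h = (∅ : Finset Y)) = {∅} := by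
      ext A
      simp only [Finset.mem_filter, Finset.mem_powerset, Finset.mem_singleton,
        Finset.image_eq_empty]
      constructor
      · rintro ⟨-, rfl⟩; rfl
      · rintro rfl; exact ⟨Finset.empty_subset _, rfl⟩
    rw [hfil]
    simp only [Finset.sum_singleton, Finset.prod_empty, Finset.sdiff_empty, one_mul,
      Finset.prod_empty, Finset.sdiff_empty, one_mul]
    rw [Finset.prod_fiberwise_of_maps_to (fun x hx => Finset.mem_image_of_mem h hx)]
  | @insert b B' hb ih =>
    intro S hB
    classical
    set F := S.filter (fun x => h x = b) with hF
    set S' := S.filter (fun x => ¬ h x = b) with hS'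
    have hdisj : Disjoint F S' := Finset.disjoint_filter_filter_not S S _
    have hunion : F ∪ S' = S := Finset.filter_union_filter_not_eq _ S
    have hS'image : S'.image h = (S.image h).erase b := by
      ext y
      simp only [Finset.mem_image, Finset.mem_erase, hS', Finset.mem_filter]
      constructor
      · rintro ⟨x, ⟨hxS, hxb⟩, rfl⟩; exact ⟨hxb, ⟨x, hxS, rfl⟩⟩
      · rintro ⟨hyb, x, hxS, rfl⟩; exact ⟨x, ⟨hxS, hyb⟩, rfl⟩
    have hB'sub : B' ⊆ S'.image h := by
      rw [hS'image]
      intro y hy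
      exact Finset.mem_erase.mpr ⟨fun e => hb (e ▸ hy), hB (Finset.mem_insert_of_mem hy)⟩
    have hfiber : ∀ y : Y, y ≠ b →
        S'.filter (fun x => h x = y) = S.filter (fun x => h x = y) := by
      intro y hy
      ext x
      simp only [hS', Finset.mem_filter]
      constructor
      · rintro ⟨⟨hxS, _⟩, hxy⟩; exact ⟨hxS, hxy⟩
      · rintro ⟨hxS, hxy⟩; exact ⟨⟨hxS, fun e => hy (by rw [← hxy, e])⟩, hxy⟩
    have hsd : ∀ A₁ ⊆ F, ∀ A₂ ⊆ S', S \ (A₁ ∪ A₂) = (F \ A₁) ∪ (S' \ A₂) := by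
      intro A₁ h1 A₂ h2
      ext x
      rw [← hunion]
      simp only [Finset.mem_sdiff, Finset.mem_union]
      constructor
      · rintro ⟨hx | hx, hn⟩
        · left; exact ⟨hx, fun h' => hn (Or.inl h')⟩
        · right; exact ⟨hx, fun h' => hn (Or.inr h')⟩
      · rintro (⟨hx, hn⟩ | ⟨hx, hn⟩)
        · exact ⟨Or.inl hx, fun h' => h'.elim hn
            (fun h2' => Finset.disjoint_left.mp hdisj hx (h2 h2'))⟩
        · exact ⟨Or.inr hx, fun h' => h'.elim
            (fun h1' => Finset.disjoint_left.mp hdisj (h1 h1') hx) hn⟩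
    have hw : ∀ A₁ ⊆ F, ∀ A₂ ⊆ S',
        ((∏ x ∈ A₁ ∪ A₂, φ x) * ∏ x ∈ S \ (A₁ ∪ A₂), (1 - φ x)) =
        ((∏ x ∈ A₁, φ x) * ∏ x ∈ F \ A₁, (1 - φ x)) *
          ((∏ x ∈ A₂, φ x) * ∏ x ∈ S' \ A₂, (1 - φ x)) := by
      intro A₁ h1 A₂ h2
      rw [hsd A₁ h1 A₂ h2,
        Finset.prod_union (hdisj.mono h1 h2),
        Finset.prod_union (hdisj.mono (Finset.sdiff_subset) (Finset.sdiff_subset))]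
      ring
    -- the bijection
    have key : ∑ A ∈ S.powerset.filter (fun A => A.image h = insert b B'),
        ((∏ x ∈ A, φ x) * ∏ x ∈ S \ A, (1 - φ x)) =
        ∑ p ∈ (F.powerset.filter (fun A => A.Nonempty)) ×ˢ
            (S'.powerset.filter (fun A => A.image h = B')),
          ((∏ x ∈ p.1, φ x) * ∏ x ∈ F \ p.1, (1 - φ x)) *
            ((∏ x ∈ p.2, φ x) * ∏ x ∈ S' \ p.2, (1 - φ x)) := by
      apply Finset.sum_nbij'
        (i := fun A => (A.filter (fun x => h x = b), A.filter (fun x => ¬ h x = b)))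
        (j := fun p => p.1 ∪ p.2)
      · intro A hA
        rw [Finset.mem_filter, Finset.mem_powerset] at hA
        obtain ⟨hAS, hAim⟩ := hA
        rw [Finset.mem_product]
        constructor
        · rw [Finset.mem_filter, Finset.mem_powerset]
          constructor
          · exact Finset.filter_subset_filter _ hAS
          · have : b ∈ A.image h := by rw [hAim]; exact Finset.mem_insert_self _ _
            obtain ⟨x, hx, hxb⟩ := Finset.mem_image.mp this
            exact ⟨x, Finset.mem_filter.mpr ⟨hx, hxb⟩⟩
        · rw [Finset.mem_filter, Finset.mem_powerset]
          constructor
          · exact Finset.filter_subset_filter _ hAS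
          · ext y
            simp only [Finset.mem_image, Finset.mem_filter]
            constructor
            · rintro ⟨x, ⟨hxA, hxb⟩, rfl⟩
              have : h x ∈ insert b B' := hAim ▸ Finset.mem_image_of_mem h hxA
              exact (Finset.mem_insert.mp this).resolve_left hxb
            · intro hy
              have hyb : y ≠ b := fun e => hb (e ▸ hy)
              have : y ∈ A.image h := hAim ▸ Finset.mem_insert_of_mem hy
              obtain ⟨x, hxA, rfl⟩ := Finset.mem_image.mp this
              exact ⟨x, ⟨hxA, fun e => hyb (by rw [e])⟩, rfl⟩
      · intro p hp
        rw [Finset.mem_product] at hp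
        obtain ⟨hp1, hp2⟩ := hp
        rw [Finset.mem_filter, Finset.mem_powerset] at hp1 hp2
        rw [Finset.mem_filter, Finset.mem_powerset]
        constructor
        · rw [← hunion]; exact Finset.union_subset_union hp1.1 hp2.1
        · rw [Finset.image_union, hp2.2]
          have him1 : p.1.image h = {b} := by
            apply Finset.Subset.antisymm
            · intro y hy
              obtain ⟨x, hx, rfl⟩ := Finset.mem_image.mp hy
              have := hp1.1 hx
              rw [hF, Finset.mem_filter] at this
              simpa using this.2
            · intro y hy
              rw [Finset.mem_singleton] at hy
              subst hy
              obtain ⟨x, hx⟩ := hp1.2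
              have := hp1.1 hx
              rw [hF, Finset.mem_filter] at this
              exact Finset.mem_image.mpr ⟨x, hx, this.2⟩
          rw [him1, ← Finset.insert_eq]
      · intro A hA
        exact Finset.filter_union_filter_not_eq _ A
      · intro p hp
        rw [Finset.mem_product] at hp
        obtain ⟨hp1, hp2⟩ := hp
        rw [Finset.mem_filter, Finset.mem_powerset] at hp1 hp2
        have e1 : (p.1 ∪ p.2).filter (fun x => h x = b) = p.1 := by
          rw [Finset.filter_union]
          rw [Finset.filter_true_of_mem (fun x hx => by
            have := hp1.1 hx; rw [hF, Finset.mem_filter] at this; exact this.2)]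
          rw [Finset.filter_false_of_mem (fun x hx => by
            have := hp2.1 hx; rw [hS', Finset.mem_filter] at this; exact this.2)]
          exact Finset.union_empty _
        have e2 : (p.1 ∪ p.2).filter (fun x => ¬ h x = b) = p.2 := by
          rw [Finset.filter_union]
          rw [Finset.filter_false_of_mem (fun x hx => by
            have := hp1.1 hx; rw [hF, Finset.mem_filter] at this
            exact fun hn => hn this.2)]
          rw [Finset.filter_true_of_mem (fun x hx => by
            have := hp2.1 hx; rw [hS', Finset.mem_filter] at this; exact this.2)]
          exact Finset.empty_union _
        exact Prod.ext e1 e2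
      · intro A hA
        rw [Finset.mem_filter, Finset.mem_powerset] at hA
        have hA1 : A.filter (fun x => h x = b) ⊆ F :=
          Finset.filter_subset_filter _ hA.1
        have hA2 : A.filter (fun x => ¬ h x = b) ⊆ S' :=
          Finset.filter_subset_filter _ hA.1
        calc ((∏ x ∈ A, φ x) * ∏ x ∈ S \ A, (1 - φ x))
            = ((∏ x ∈ A.filter (fun x => h x = b) ∪ A.filter (fun x => ¬ h x = b), φ x) *
                ∏ x ∈ S \ (A.filter (fun x => h x = b) ∪ A.filter (fun x => ¬ h x = b)),
                  (1 - φ x)) := by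
              rw [Finset.filter_union_filter_not_eq]
          _ = _ := hw _ hA1 _ hA2
    rw [key, Finset.sum_product]
    dsimp only
    rw [← Finset.sum_mul_sum, pw_nonempty, ih S' hB'sub]
    -- now rewrite RHS
    have eB' : ∀ y ∈ B', (1 - ∏ x ∈ S'.filter (fun x => h x = y), (1 - φ x)) =
        (1 - ∏ x ∈ S.filter (fun x => h x = y), (1 - φ x)) := by
      intro y hy
      rw [hfiber y (fun e => hb (e ▸ hy))]
    have eset : S'.image h \ B' = S.image h \ insert b B' := by
      rw [hS'image]
      ext y
      simp only [Finset.mem_sdiff, Finset.mem_erase, Finset.mem_insert]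
      constructor
      · rintro ⟨⟨hyb, hyS⟩, hyB⟩
        exact ⟨hyS, fun h' => h'.elim hyb hyB⟩
      · rintro ⟨hyS, hn⟩
        exact ⟨⟨fun e => hn (Or.inl e), hyS⟩, fun e => hn (Or.inr e)⟩
    have efib : ∀ y ∈ S.image h \ insert b B',
        (∏ x ∈ S'.filter (fun x => h x = y), (1 - φ x)) =
        ∏ x ∈ S.filter (fun x => h x = y), (1 - φ x) := by
      intro y hy
      rw [Finset.mem_sdiff, Finset.mem_insert] at hy
      rw [hfiber y (fun e => hy.2 (Or.inl e))]
    rw [Finset.prod_congr rfl eB']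
    rw [eset, Finset.prod_congr rfl efib]
    rw [Finset.prod_insert hb]
    ring

/-- Naturality of the possible-worlds transformation: for `h : X → Y`,
a finite `S ⊆ X` and `φ` with values in `[0,1]` on `S`, and any finite
`B ⊆ h[S]`, the possible-worlds weight that the pushforward of `φ` along `h`
(via probabilistic or on fibers) assigns to `B` equals the total
possible-worlds weight of all `A ⊆ S` with `h[A] = B`. Hence pushing forward
the possible-worlds distribution of `φ` along `A ↦ h[A]` coincides with first
pushing `φ` forward along `h` and then forming the possible-worlds
distribution. -/
theorem possible_worlds_naturality {X Y : Type*} [DecidableEq X] [DecidableEq Y]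
    (h : X → Y) (S : Finset X) (φ : X → ℝ)
    (hφ : ∀ x ∈ S, 0 ≤ φ x ∧ φ x ≤ 1)
    (B : Finset Y) (hB : B ⊆ S.image h) :
    ∑ A ∈ S.powerset.filter (fun A => A.image h = B),
        ((∏ x ∈ A, φ x) * ∏ x ∈ S \ A, (1 - φ x)) =
      (∏ y ∈ B, (1 - ∏ x ∈ S.filter (fun x => h x = y), (1 - φ x))) *
        ∏ y ∈ (S.image h) \ B, ∏ x ∈ S.filter (fun x => h x = y), (1 - φ x) :=
  pw_aux h φ B S hB
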